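/- arXiv:math/9903150 — 2 statements merged into one kernel-verified Lean document; each statement's English description precedes it below -/
import Mathlib

section
/- Let r : ℝ² → ℝ⁴ satisfy r_xx = β r_y + (1/2)(V - β_y) r and r_yy = γ r_x + (1/2)(W - γ_x) r, and suppose r⁰ is nowhere zero. Then R = (r¹/r⁰, r²/r⁰, r³/r⁰) satisfies R_xx = β R_y + a R_x and R_yy = γ R_x + b R_y with a = -2 r⁰_x/r⁰ and b = -2 r⁰_y/r⁰. -/
/-- Partial derivative in the first variable. -/
noncomputable def pdx {E : Type*} [NormedAddCommGroup E] [NormedSpace ℝ E]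
    (f : ℝ → ℝ → E) : ℝ → ℝ → E := fun x y => deriv (fun t => f t y) x

/-- Partial derivative in the second variable. -/
noncomputable def pdy {E : Type*} [NormedAddCommGroup E] [NormedSpace ℝ E]
    (f : ℝ → ℝ → E) : ℝ → ℝ → E := fun x y => deriv (fun t => f x t) y

section helpers
variable {E : Type*} [NormedAddCommGroup E] [NormedSpace ℝ E]

lemma hasDerivAt_pdx (F : ℝ → ℝ → E) (hF : ContDiff ℝ (⊤ : ℕ∞) (Function.uncurry F)) (x y : ℝ) :
    HasDerivAt (fun t => F t y) (pdx F x y) x := by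
  have h : ContDiff ℝ (⊤ : ℕ∞) (fun t => F t y) := hF.comp (contDiff_id.prodMk contDiff_const)
  exact (h.differentiable (by simp) x).hasDerivAt

lemma hasDerivAt_pdy (F : ℝ → ℝ → E) (hF : ContDiff ℝ (⊤ : ℕ∞) (Function.uncurry F)) (x y : ℝ) :
    HasDerivAt (fun t => F x t) (pdy F x y) y := by
  have h : ContDiff ℝ (⊤ : ℕ∞) (fun t => F x t) := hF.comp (contDiff_const.prodMk contDiff_id)
  exact (h.differentiable (by simp) y).hasDerivAt

lemma contDiff_uncurry_pdx (F : ℝ → ℝ → E) (hF : ContDiff ℝ (⊤ : ℕ∞) (Function.uncurry F)) :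
    ContDiff ℝ (⊤ : ℕ∞) (Function.uncurry (pdx F)) := by
  have h1 : ∀ p : ℝ × ℝ, HasDerivAt (fun t => F t p.2)
      (fderiv ℝ (Function.uncurry F) p ((1:ℝ), (0:ℝ))) p.1 := by
    intro p
    have hd : HasDerivAt (fun t : ℝ => (t, p.2)) ((1:ℝ), (0:ℝ)) p.1 :=
      (hasDerivAt_id p.1).prodMk (hasDerivAt_const p.1 p.2)
    exact ((hF.differentiable (by simp) p).hasFDerivAt).comp_hasDerivAt p.1 hd
  have h2 : Function.uncurry (pdx F) = fun p => fderiv ℝ (Function.uncurry F) p ((1:ℝ), (0:ℝ)) := by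
    funext p
    exact (h1 p).deriv
  rw [h2]
  exact (hF.fderiv_right (by simp)).clm_apply contDiff_const

lemma contDiff_uncurry_pdy (F : ℝ → ℝ → E) (hF : ContDiff ℝ (⊤ : ℕ∞) (Function.uncurry F)) :
    ContDiff ℝ (⊤ : ℕ∞) (Function.uncurry (pdy F)) := by
  have h1 : ∀ p : ℝ × ℝ, HasDerivAt (fun t => F p.1 t)
      (fderiv ℝ (Function.uncurry F) p ((0:ℝ), (1:ℝ))) p.2 := by
    intro p
    have hd : HasDerivAt (fun t : ℝ => (p.1, t)) ((0:ℝ), (1:ℝ)) p.2 :=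
      (hasDerivAt_const p.2 p.1).prodMk (hasDerivAt_id p.2)
    exact ((hF.differentiable (by simp) p).hasFDerivAt).comp_hasDerivAt p.2 hd
  have h2 : Function.uncurry (pdy F) = fun p => fderiv ℝ (Function.uncurry F) p ((0:ℝ), (1:ℝ)) := by
    funext p
    exact (h1 p).deriv
  rw [h2]
  exact (hF.fderiv_right (by simp)).clm_apply contDiff_const

end helpers

lemma pdx_pi {n : ℕ} (F : ℝ → ℝ → (Fin n → ℝ)) (x y : ℝ)
    (h : ∀ i, DifferentiableAt ℝ (fun t => F t y i) x) :
    pdx F x y = fun i => pdx (fun x y => F x y i) x y := by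
  have H : HasDerivAt (fun t => F t y) (fun i => pdx (fun x y => F x y i) x y) x :=
    hasDerivAt_pi.2 fun i => (h i).hasDerivAt
  exact H.deriv

lemma pdy_pi {n : ℕ} (F : ℝ → ℝ → (Fin n → ℝ)) (x y : ℝ)
    (h : ∀ i, DifferentiableAt ℝ (fun t => F x t i) y) :
    pdy F x y = fun i => pdy (fun x y => F x y i) x y := by
  have H : HasDerivAt (fun t => F x t) (fun i => pdy (fun x y => F x y i) x y) y :=
    hasDerivAt_pi.2 fun i => (h i).hasDerivAt
  exact H.deriv

lemma key_x (β c f g : ℝ → ℝ → ℝ)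
    (hf : ContDiff ℝ (⊤ : ℕ∞) (Function.uncurry f)) (hg : ContDiff ℝ (⊤ : ℕ∞) (Function.uncurry g))
    (hg0 : ∀ x y, g x y ≠ 0)
    (hfeq : ∀ x y, pdx (pdx f) x y = β x y * pdy f x y + c x y * f x y)
    (hgeq : ∀ x y, pdx (pdx g) x y = β x y * pdy g x y + c x y * g x y)
    (x y : ℝ) :
    pdx (pdx (fun x y => f x y / g x y)) x y
      = β x y * pdy (fun x y => f x y / g x y) x y
        + (-2 * pdx g x y / g x y) * pdx (fun x y => f x y / g x y) x y := by
  have h1 : ∀ x y : ℝ, pdx (fun x y => f x y / g x y) x y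
      = (pdx f x y * g x y - f x y * pdx g x y) / (g x y) ^ 2 := fun x y =>
    ((hasDerivAt_pdx f hf x y).div (hasDerivAt_pdx g hg x y) (hg0 x y)).deriv
  have h1y : pdy (fun x y => f x y / g x y) x y
      = (pdy f x y * g x y - f x y * pdy g x y) / (g x y) ^ 2 :=
    ((hasDerivAt_pdy f hf x y).div (hasDerivAt_pdy g hg x y) (hg0 x y)).deriv
  have hFx := contDiff_uncurry_pdx f hf
  have hGx := contDiff_uncurry_pdx g hg
  have hN : HasDerivAt (fun t => pdx f t y * g t y - f t y * pdx g t y)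
      (pdx (pdx f) x y * g x y + pdx f x y * pdx g x y
        - (pdx f x y * pdx g x y + f x y * pdx (pdx g) x y)) x :=
    ((hasDerivAt_pdx (pdx f) hFx x y).mul (hasDerivAt_pdx g hg x y)).sub
      ((hasDerivAt_pdx f hf x y).mul (hasDerivAt_pdx (pdx g) hGx x y))
  have hD : HasDerivAt (fun t => (g t y) ^ 2)
      ((2 : ℕ) * (g x y) ^ 1 * pdx g x y) x := (hasDerivAt_pdx g hg x y).pow 2
  have h2 : pdx (pdx (fun x y => f x y / g x y)) x y
      = deriv (fun t => (pdx f t y * g t y - f t y * pdx g t y) / (g t y) ^ 2) x := by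
    have he : (fun t => pdx (fun x y => f x y / g x y) t y)
        = fun t => (pdx f t y * g t y - f t y * pdx g t y) / (g t y) ^ 2 :=
      funext fun t => h1 t y
    show deriv (fun t => pdx (fun x y => f x y / g x y) t y) x = _
    rw [he]
  rw [h2, HasDerivAt.deriv (f := fun t => (pdx f t y * g t y - f t y * pdx g t y) / (g t y) ^ 2) (hN.div hD (pow_ne_zero 2 (hg0 x y))), h1y, h1 x y, hfeq x y, hgeq x y]
  have hgne := hg0 x y
  field_simp
  ring

lemma key_y (γ c f g : ℝ → ℝ → ℝ)
    (hf : ContDiff ℝ (⊤ : ℕ∞) (Function.uncurry f)) (hg : ContDiff ℝ (⊤ : ℕ∞) (Function.uncurry g))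
    (hg0 : ∀ x y, g x y ≠ 0)
    (hfeq : ∀ x y, pdy (pdy f) x y = γ x y * pdx f x y + c x y * f x y)
    (hgeq : ∀ x y, pdy (pdy g) x y = γ x y * pdx g x y + c x y * g x y)
    (x y : ℝ) :
    pdy (pdy (fun x y => f x y / g x y)) x y
      = γ x y * pdx (fun x y => f x y / g x y) x y
        + (-2 * pdy g x y / g x y) * pdy (fun x y => f x y / g x y) x y := by
  have h1 : ∀ x y : ℝ, pdy (fun x y => f x y / g x y) x y
      = (pdy f x y * g x y - f x y * pdy g x y) / (g x y) ^ 2 := fun x y =>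
    ((hasDerivAt_pdy f hf x y).div (hasDerivAt_pdy g hg x y) (hg0 x y)).deriv
  have h1x : pdx (fun x y => f x y / g x y) x y
      = (pdx f x y * g x y - f x y * pdx g x y) / (g x y) ^ 2 :=
    ((hasDerivAt_pdx f hf x y).div (hasDerivAt_pdx g hg x y) (hg0 x y)).deriv
  have hFy := contDiff_uncurry_pdy f hf
  have hGy := contDiff_uncurry_pdy g hg
  have hN : HasDerivAt (fun t => pdy f x t * g x t - f x t * pdy g x t)
      (pdy (pdy f) x y * g x y + pdy f x y * pdy g x y
        - (pdy f x y * pdy g x y + f x y * pdy (pdy g) x y)) y :=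
    ((hasDerivAt_pdy (pdy f) hFy x y).mul (hasDerivAt_pdy g hg x y)).sub
      ((hasDerivAt_pdy f hf x y).mul (hasDerivAt_pdy (pdy g) hGy x y))
  have hD : HasDerivAt (fun t => (g x t) ^ 2)
      ((2 : ℕ) * (g x y) ^ 1 * pdy g x y) y := (hasDerivAt_pdy g hg x y).pow 2
  have h2 : pdy (pdy (fun x y => f x y / g x y)) x y
      = deriv (fun t => (pdy f x t * g x t - f x t * pdy g x t) / (g x t) ^ 2) y := by
    have he : (fun t => pdy (fun x y => f x y / g x y) x t)
        = fun t => (pdy f x t * g x t - f x t * pdy g x t) / (g x t) ^ 2 :=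
      funext fun t => h1 x t
    show deriv (fun t => pdy (fun x y => f x y / g x y) x t) y = _
    rw [he]
  rw [h2, HasDerivAt.deriv (f := fun t => (pdy f x t * g x t - f x t * pdy g x t) / (g x t) ^ 2) (hN.div hD (pow_ne_zero 2 (hg0 x y))), h1x, h1 x y, hfeq x y, hgeq x y]
  have hgne := hg0 x y
  field_simp
  ring

theorem affine_gauge
    (β γ V W : ℝ → ℝ → ℝ) (r : ℝ → ℝ → (Fin 4 → ℝ))
    (hr : ContDiff ℝ (⊤ : ℕ∞) (Function.uncurry r))
    (hr0 : ∀ x y, r x y 0 ≠ 0)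
    (heq1 : ∀ x y, pdx (pdx r) x y
      = β x y • pdy r x y + ((1:ℝ)/2 * (V x y - pdy β x y)) • r x y)
    (heq2 : ∀ x y, pdy (pdy r) x y
      = γ x y • pdx r x y + ((1:ℝ)/2 * (W x y - pdx γ x y)) • r x y)
    (R : ℝ → ℝ → (Fin 3 → ℝ))
    (hR : ∀ x y i, R x y i = r x y i.succ / r x y 0)
    (a b : ℝ → ℝ → ℝ)
    (ha : ∀ x y, a x y = -2 * pdx (fun x y => r x y 0) x y / r x y 0)
    (hb : ∀ x y, b x y = -2 * pdy (fun x y => r x y 0) x y / r x y 0) :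
    (∀ x y, pdx (pdx R) x y = β x y • pdy R x y + a x y • pdx R x y) ∧
    (∀ x y, pdy (pdy R) x y = γ x y • pdx R x y + b x y • pdy R x y) := by
  have hcomp : ∀ k : Fin 4, ContDiff ℝ (⊤ : ℕ∞) (Function.uncurry (fun x y => r x y k)) :=
    fun k => contDiff_pi.1 hr k
  -- componentwise partial derivatives of r
  have hpdxr' : pdx r = fun x y k => pdx (fun x y => r x y k) x y :=
    funext fun x => funext fun y =>
      pdx_pi r x y fun k => (hasDerivAt_pdx _ (hcomp k) x y).differentiableAt
  have hpdyr' : pdy r = fun x y k => pdy (fun x y => r x y k) x y :=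
    funext fun x => funext fun y =>
      pdy_pi r x y fun k => (hasDerivAt_pdy _ (hcomp k) x y).differentiableAt
  have heq1' : ∀ k : Fin 4, ∀ x y, pdx (pdx (fun x y => r x y k)) x y
      = β x y * pdy (fun x y => r x y k) x y
        + ((1:ℝ)/2 * (V x y - pdy β x y)) * r x y k := by
    intro k x y
    have h := congrFun (heq1 x y) k
    rw [hpdxr', hpdyr'] at h
    have hl : pdx (fun x y k => pdx (fun x y => r x y k) x y) x y
        = fun k => pdx (fun x y => pdx (fun x y => r x y k) x y) x y :=
      pdx_pi _ x y fun k =>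
        (hasDerivAt_pdx _ (contDiff_uncurry_pdx _ (hcomp k)) x y).differentiableAt
    rw [hl] at h
    simpa using h
  have heq2' : ∀ k : Fin 4, ∀ x y, pdy (pdy (fun x y => r x y k)) x y
      = γ x y * pdx (fun x y => r x y k) x y
        + ((1:ℝ)/2 * (W x y - pdx γ x y)) * r x y k := by
    intro k x y
    have h := congrFun (heq2 x y) k
    rw [hpdyr', hpdxr'] at h
    have hl : pdy (fun x y k => pdy (fun x y => r x y k) x y) x y
        = fun k => pdy (fun x y => pdy (fun x y => r x y k) x y) x y :=
      pdy_pi _ x y fun k =>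
        (hasDerivAt_pdy _ (contDiff_uncurry_pdy _ (hcomp k)) x y).differentiableAt
    rw [hl] at h
    simpa using h
  have hRdef : R = fun x y i => r x y i.succ / r x y 0 :=
    funext fun x => funext fun y => funext fun i => hR x y i
  subst hRdef
  have hRc : ∀ i : Fin 3,
      ContDiff ℝ (⊤ : ℕ∞) (Function.uncurry (fun x y => r x y i.succ / r x y 0)) :=
    fun i => (hcomp i.succ).div (hcomp 0) fun p => hr0 p.1 p.2
  have hpdxR' : pdx (fun x y i => r x y i.succ / r x y 0)
      = fun x y (i : Fin 3) => pdx (fun x y => r x y i.succ / r x y 0) x y :=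
    funext fun x => funext fun y =>
      pdx_pi _ x y fun i => (hasDerivAt_pdx _ (hRc i) x y).differentiableAt
  have hpdyR' : pdy (fun x y i => r x y i.succ / r x y 0)
      = fun x y (i : Fin 3) => pdy (fun x y => r x y i.succ / r x y 0) x y :=
    funext fun x => funext fun y =>
      pdy_pi _ x y fun i => (hasDerivAt_pdy _ (hRc i) x y).differentiableAt
  constructor
  · intro x y
    rw [hpdxR', hpdyR']
    have hxx : pdx (fun x y (i : Fin 3) => pdx (fun x y => r x y i.succ / r x y 0) x y) x y
        = fun i => pdx (fun x y => pdx (fun x y => r x y i.succ / r x y 0) x y) x y :=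
      pdx_pi _ x y fun i =>
        (hasDerivAt_pdx _ (contDiff_uncurry_pdx _ (hRc i)) x y).differentiableAt
    rw [hxx]
    funext i
    simp only [Pi.add_apply, Pi.smul_apply, smul_eq_mul]
    rw [ha x y]
    exact key_x β (fun x y => (1:ℝ)/2 * (V x y - pdy β x y))
      (fun x y => r x y i.succ) (fun x y => r x y 0)
      (hcomp i.succ) (hcomp 0) hr0 (heq1' i.succ) (heq1' 0) x y
  · intro x y
    rw [hpdyR', hpdxR']
    have hyy : pdy (fun x y (i : Fin 3) => pdy (fun x y => r x y i.succ / r x y 0) x y) x y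
        = fun i => pdy (fun x y => pdy (fun x y => r x y i.succ / r x y 0) x y) x y :=
      pdy_pi _ x y fun i =>
        (hasDerivAt_pdy _ (contDiff_uncurry_pdy _ (hRc i)) x y).differentiableAt
    rw [hyy]
    funext i
    simp only [Pi.add_apply, Pi.smul_apply, smul_eq_mul]
    rw [hb x y]
    exact key_y γ (fun x y => (1:ℝ)/2 * (W x y - pdx γ x y))
      (fun x y => r x y i.succ) (fun x y => r x y 0)
      (hcomp i.succ) (hcomp 0) hr0 (heq2' i.succ) (heq2' 0) x y
end

section
/- Let β, γ, V, W be smooth solutions of the projective Gauss–Codazzi equations with β, γ nowhere zero, and define k = βγ - (ln β)_xy, l = βγ - (ln γ)_xy, a = W - (ln β)_yy - (1/2)((ln β)_y)², b = V - (ln γ)_xx - (1/2)((ln γ)_x)². Then a_x = k_y + (β_y/β)k, b_y = l_x + (γ_x/γ)l, and β a_y + 2a β_y = γ b_x + 2b γ_x. -/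
open Function Real

section infra
variable {f g : ℝ → ℝ → ℝ}

lemma sliceY (hf : ContDiff ℝ (⊤ : ℕ∞) (uncurry f)) (x : ℝ) : ContDiff ℝ (⊤ : ℕ∞) (f x) :=
  hf.comp (contDiff_const.prodMk contDiff_id)

lemma sliceX (hf : ContDiff ℝ (⊤ : ℕ∞) (uncurry f)) (y : ℝ) : ContDiff ℝ (⊤ : ℕ∞) (fun t => f t y) :=
  hf.comp (contDiff_id.prodMk contDiff_const)

lemma pdx_fderiv (hf : ContDiff ℝ (⊤ : ℕ∞) (uncurry f)) (x y : ℝ) :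
    pdx f x y = fderiv ℝ (uncurry f) (x, y) (1, 0) := by
  have h1 : HasDerivAt (fun t : ℝ => (t, y)) (1, 0) x :=
    (hasDerivAt_id x).prodMk (hasDerivAt_const x y)
  have h2 : HasFDerivAt (uncurry f) (fderiv ℝ (uncurry f) (x, y)) (x, y) :=
    (hf.differentiable (by simp) (x, y)).hasFDerivAt
  exact (h2.comp_hasDerivAt x h1).deriv

lemma pdy_fderiv (hf : ContDiff ℝ (⊤ : ℕ∞) (uncurry f)) (x y : ℝ) :
    pdy f x y = fderiv ℝ (uncurry f) (x, y) (0, 1) := by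
  have h1 : HasDerivAt (fun t : ℝ => (x, t)) (0, 1) y :=
    (hasDerivAt_const y x).prodMk (hasDerivAt_id y)
  have h2 : HasFDerivAt (uncurry f) (fderiv ℝ (uncurry f) (x, y)) (x, y) :=
    (hf.differentiable (by simp) (x, y)).hasFDerivAt
  exact (h2.comp_hasDerivAt y h1).deriv

lemma pdx_smooth (hf : ContDiff ℝ (⊤ : ℕ∞) (uncurry f)) : ContDiff ℝ (⊤ : ℕ∞) (uncurry (pdx f)) := by
  have : uncurry (pdx f) = fun p : ℝ × ℝ => fderiv ℝ (uncurry f) p (1, 0) := by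
    funext p
    exact pdx_fderiv hf p.1 p.2
  rw [this]
  exact (hf.fderiv_right (by simp)).clm_apply contDiff_const

lemma pdy_smooth (hf : ContDiff ℝ (⊤ : ℕ∞) (uncurry f)) : ContDiff ℝ (⊤ : ℕ∞) (uncurry (pdy f)) := by
  have : uncurry (pdy f) = fun p : ℝ × ℝ => fderiv ℝ (uncurry f) p (0, 1) := by
    funext p
    exact pdy_fderiv hf p.1 p.2
  rw [this]
  exact (hf.fderiv_right (by simp)).clm_apply contDiff_const

lemma clairaut (hf : ContDiff ℝ (⊤ : ℕ∞) (uncurry f)) : pdx (pdy f) = pdy (pdx f) := by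
  funext x y
  have hf1 := pdy_smooth hf
  have hf2 := pdx_smooth hf
  have e1 : pdx (pdy f) x y = fderiv ℝ (uncurry (pdy f)) (x, y) (1, 0) := pdx_fderiv hf1 x y
  have e2 : pdy (pdx f) x y = fderiv ℝ (uncurry (pdx f)) (x, y) (0, 1) := pdy_fderiv hf2 x y
  have u1 : uncurry (pdy f) = fun p : ℝ × ℝ => fderiv ℝ (uncurry f) p (0, 1) := by
    funext p; exact pdy_fderiv hf p.1 p.2
  have u2 : uncurry (pdx f) = fun p : ℝ × ℝ => fderiv ℝ (uncurry f) p (1, 0) := by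
    funext p; exact pdx_fderiv hf p.1 p.2
  have hd : DifferentiableAt ℝ (fderiv ℝ (uncurry f)) (x, y) :=
    ((hf.fderiv_right (m := 1) (WithTop.coe_le_coe.mpr le_top)).differentiable one_ne_zero).differentiableAt
  have c1 : fderiv ℝ (uncurry (pdy f)) (x, y) (1, 0)
      = fderiv ℝ (fderiv ℝ (uncurry f)) (x, y) (1, 0) (0, 1) := by
    rw [u1, fderiv_clm_apply hd (differentiableAt_const _)]
    simp
  have c2 : fderiv ℝ (uncurry (pdx f)) (x, y) (0, 1)
      = fderiv ℝ (fderiv ℝ (uncurry f)) (x, y) (0, 1) (1, 0) := by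
    rw [u2, fderiv_clm_apply hd (differentiableAt_const _)]
    simp
  have sym : IsSymmSndFDerivAt ℝ (uncurry f) (x, y) :=
    hf.contDiffAt.isSymmSndFDerivAt (by rw [minSmoothness_of_isRCLikeNormedField]; exact WithTop.coe_le_coe.mpr le_top)
  rw [e1, e2, c1, c2, sym (1,0) (0,1)]

end infra

section infra2
variable {f g : ℝ → ℝ → ℝ}

lemma hasDerivX (hf : ContDiff ℝ (⊤ : ℕ∞) (uncurry f)) (x y : ℝ) :
    HasDerivAt (fun t => f t y) (pdx f x y) x :=
  (((sliceX hf y).differentiable (by simp)) x).hasDerivAt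

lemma hasDerivY (hf : ContDiff ℝ (⊤ : ℕ∞) (uncurry f)) (x y : ℝ) :
    HasDerivAt (fun t => f x t) (pdy f x y) y :=
  (((sliceY hf x).differentiable (by simp)) y).hasDerivAt

lemma log_smooth (hf : ContDiff ℝ (⊤ : ℕ∞) (uncurry f)) (hpos : ∀ x y, f x y > 0) :
    ContDiff ℝ (⊤ : ℕ∞) (uncurry (fun x y => Real.log (f x y))) :=
  hf.log (fun p => (hpos p.1 p.2).ne')

lemma pdx_log (hf : ContDiff ℝ (⊤ : ℕ∞) (uncurry f)) (hpos : ∀ x y, f x y > 0) (x y : ℝ) :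
    pdx (fun x y => Real.log (f x y)) x y = pdx f x y / f x y :=
  ((hasDerivX hf x y).log (hpos x y).ne').deriv

lemma pdy_log (hf : ContDiff ℝ (⊤ : ℕ∞) (uncurry f)) (hpos : ∀ x y, f x y > 0) (x y : ℝ) :
    pdy (fun x y => Real.log (f x y)) x y = pdy f x y / f x y :=
  ((hasDerivY hf x y).log (hpos x y).ne').deriv

end infra2

section core
variable {β γ V W : ℝ → ℝ → ℝ}

lemma claim1 (hβ : ContDiff ℝ (⊤ : ℕ∞) (uncurry β)) (hγ : ContDiff ℝ (⊤ : ℕ∞) (uncurry γ))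
    (hW : ContDiff ℝ (⊤ : ℕ∞) (uncurry W)) (hβpos : ∀ x y, β x y > 0)
    (h2 : ∀ x y, pdx W x y = 2 * γ x y * pdy β x y + β x y * pdy γ x y) (x y : ℝ) :
    pdx (fun x y => W x y - pdy (pdy (fun x y => Real.log (β x y))) x y
        - (1/2) * (pdy (fun x y => Real.log (β x y)) x y)^2) x y
    = pdy (fun x y => β x y * γ x y
        - pdy (pdx (fun x y => Real.log (β x y))) x y) x y
      + (pdy β x y / β x y) * (β x y * γ x y
        - pdy (pdx (fun x y => Real.log (β x y))) x y) := by
  set B : ℝ → ℝ → ℝ := fun x y => Real.log (β x y) with hBdef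
  have hB : ContDiff ℝ (⊤ : ℕ∞) (uncurry B) := log_smooth hβ hβpos
  have e1 : pdx (fun x y => W x y - pdy (pdy B) x y - (1/2) * (pdy B x y)^2) x y
      = pdx W x y - pdx (pdy (pdy B)) x y
        - (1/2) * (2 * pdy B x y ^ 1 * pdx (pdy B) x y) :=
    (((hasDerivX hW x y).sub (hasDerivX (pdy_smooth (pdy_smooth hB)) x y)).sub
      (((hasDerivX (pdy_smooth hB) x y).pow 2).const_mul (1/2))).deriv
  have e2 : pdy (fun x y => β x y * γ x y - pdy (pdx B) x y) x y
      = (pdy β x y * γ x y + β x y * pdy γ x y) - pdy (pdy (pdx B)) x y :=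
    (((hasDerivY hβ x y).mul (hasDerivY hγ x y)).sub
      (hasDerivY (pdy_smooth (pdx_smooth hB)) x y)).deriv
  have e3 : pdy B x y = pdy β x y / β x y := pdy_log hβ hβpos x y
  have e4 : pdx (pdy B) x y = pdy (pdx B) x y :=
    congrFun (congrFun (clairaut hB) x) y
  have e5 : pdx (pdy (pdy B)) x y = pdy (pdy (pdx B)) x y := by
    have h1 : pdx (pdy (pdy B)) = pdy (pdx (pdy B)) := clairaut (pdy_smooth hB)
    have h2' : pdx (pdy B) = pdy (pdx B) := clairaut hB
    rw [h1, h2']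
  have hβ0 : β x y ≠ 0 := (hβpos x y).ne'
  rw [e1, e2, e3, e4, e5, h2 x y]
  field_simp
  ring

lemma claim2 (hβ : ContDiff ℝ (⊤ : ℕ∞) (uncurry β)) (hγ : ContDiff ℝ (⊤ : ℕ∞) (uncurry γ))
    (hV : ContDiff ℝ (⊤ : ℕ∞) (uncurry V)) (hγpos : ∀ x y, γ x y > 0)
    (h3 : ∀ x y, pdy V x y = 2 * β x y * pdx γ x y + γ x y * pdx β x y) (x y : ℝ) :
    pdy (fun x y => V x y - pdx (pdx (fun x y => Real.log (γ x y))) x y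
        - (1/2) * (pdx (fun x y => Real.log (γ x y)) x y)^2) x y
    = pdx (fun x y => β x y * γ x y
        - pdy (pdx (fun x y => Real.log (γ x y))) x y) x y
      + (pdx γ x y / γ x y) * (β x y * γ x y
        - pdy (pdx (fun x y => Real.log (γ x y))) x y) := by
  set G : ℝ → ℝ → ℝ := fun x y => Real.log (γ x y) with hGdef
  have hG : ContDiff ℝ (⊤ : ℕ∞) (uncurry G) := log_smooth hγ hγpos
  have e1 : pdy (fun x y => V x y - pdx (pdx G) x y - (1/2) * (pdx G x y)^2) x y
      = pdy V x y - pdy (pdx (pdx G)) x y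
        - (1/2) * (2 * pdx G x y ^ 1 * pdy (pdx G) x y) :=
    (((hasDerivY hV x y).sub (hasDerivY (pdx_smooth (pdx_smooth hG)) x y)).sub
      (((hasDerivY (pdx_smooth hG) x y).pow 2).const_mul (1/2))).deriv
  have e2 : pdx (fun x y => β x y * γ x y - pdy (pdx G) x y) x y
      = (pdx β x y * γ x y + β x y * pdx γ x y) - pdx (pdy (pdx G)) x y :=
    (((hasDerivX hβ x y).mul (hasDerivX hγ x y)).sub
      (hasDerivX (pdy_smooth (pdx_smooth hG)) x y)).deriv
  have e3 : pdx G x y = pdx γ x y / γ x y := pdx_log hγ hγpos x y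
  have e5 : pdy (pdx (pdx G)) x y = pdx (pdy (pdx G)) x y :=
    (congrFun (congrFun (clairaut (pdx_smooth hG)) x) y).symm
  have hγ0 : γ x y ≠ 0 := (hγpos x y).ne'
  rw [e1, e2, e3, e5, h3 x y]
  field_simp
  ring

lemma claim3y (hβ : ContDiff ℝ (⊤ : ℕ∞) (uncurry β)) (hW : ContDiff ℝ (⊤ : ℕ∞) (uncurry W))
    (hβpos : ∀ x y, β x y > 0) (x y : ℝ) :
    β x y * pdy (fun x y => W x y - pdy (pdy (fun x y => Real.log (β x y))) x y
        - (1/2) * (pdy (fun x y => Real.log (β x y)) x y)^2) x y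
      + 2 * (W x y - pdy (pdy (fun x y => Real.log (β x y))) x y
        - (1/2) * (pdy (fun x y => Real.log (β x y)) x y)^2) * pdy β x y
    = -(pdy (pdy (pdy β)) x y - 2 * pdy β x y * W x y - β x y * pdy W x y) := by
  set B : ℝ → ℝ → ℝ := fun x y => Real.log (β x y) with hBdef
  have hB : ContDiff ℝ (⊤ : ℕ∞) (uncurry B) := log_smooth hβ hβpos
  have f1 : pdy (fun x y => W x y - pdy (pdy B) x y - (1/2) * (pdy B x y)^2) x y
      = pdy W x y - pdy (pdy (pdy B)) x y
        - (1/2) * (2 * pdy B x y ^ 1 * pdy (pdy B) x y) :=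
    (((hasDerivY hW x y).sub (hasDerivY (pdy_smooth (pdy_smooth hB)) x y)).sub
      (((hasDerivY (pdy_smooth hB) x y).pow 2).const_mul (1/2))).deriv
  have q1 : ∀ x y, pdy β x y = β x y * pdy B x y := by
    intro x y
    rw [pdy_log hβ hβpos x y, mul_div_cancel₀ _ (hβpos x y).ne']
  have q2 : ∀ x y, pdy (pdy β) x y
      = pdy β x y * pdy B x y + β x y * pdy (pdy B) x y := by
    intro x y
    have hfe : (fun t => pdy β x t) = (fun t => β x t * pdy B x t) :=
      funext fun t => q1 x t
    have : pdy (pdy β) x y = deriv (fun t => β x t * pdy B x t) y := by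
      show deriv (fun t => pdy β x t) y = _
      rw [hfe]
    rw [this]
    exact ((hasDerivY hβ x y).mul (hasDerivY (pdy_smooth hB) x y)).deriv
  have q3 : pdy (pdy (pdy β)) x y
      = (pdy (pdy β) x y * pdy B x y + pdy β x y * pdy (pdy B) x y)
        + (pdy β x y * pdy (pdy B) x y + β x y * pdy (pdy (pdy B)) x y) := by
    have hfe : (fun t => pdy (pdy β) x t)
        = (fun t => pdy β x t * pdy B x t + β x t * pdy (pdy B) x t) :=
      funext fun t => q2 x t
    have : pdy (pdy (pdy β)) x y
        = deriv (fun t => pdy β x t * pdy B x t + β x t * pdy (pdy B) x t) y := by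
      show deriv (fun t => pdy (pdy β) x t) y = _
      rw [hfe]
    rw [this]
    exact (((hasDerivY (pdy_smooth hβ) x y).mul (hasDerivY (pdy_smooth hB) x y)).add
      ((hasDerivY hβ x y).mul (hasDerivY (pdy_smooth (pdy_smooth hB)) x y))).deriv
  rw [f1, q3, q2 x y, q1 x y]
  ring

lemma claim3x (hγ : ContDiff ℝ (⊤ : ℕ∞) (uncurry γ)) (hV : ContDiff ℝ (⊤ : ℕ∞) (uncurry V))
    (hγpos : ∀ x y, γ x y > 0) (x y : ℝ) :
    γ x y * pdx (fun x y => V x y - pdx (pdx (fun x y => Real.log (γ x y))) x y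
        - (1/2) * (pdx (fun x y => Real.log (γ x y)) x y)^2) x y
      + 2 * (V x y - pdx (pdx (fun x y => Real.log (γ x y))) x y
        - (1/2) * (pdx (fun x y => Real.log (γ x y)) x y)^2) * pdx γ x y
    = -(pdx (pdx (pdx γ)) x y - 2 * pdx γ x y * V x y - γ x y * pdx V x y) := by
  set G : ℝ → ℝ → ℝ := fun x y => Real.log (γ x y) with hGdef
  have hG : ContDiff ℝ (⊤ : ℕ∞) (uncurry G) := log_smooth hγ hγpos
  have f1 : pdx (fun x y => V x y - pdx (pdx G) x y - (1/2) * (pdx G x y)^2) x y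
      = pdx V x y - pdx (pdx (pdx G)) x y
        - (1/2) * (2 * pdx G x y ^ 1 * pdx (pdx G) x y) :=
    (((hasDerivX hV x y).sub (hasDerivX (pdx_smooth (pdx_smooth hG)) x y)).sub
      (((hasDerivX (pdx_smooth hG) x y).pow 2).const_mul (1/2))).deriv
  have q1 : ∀ x y, pdx γ x y = γ x y * pdx G x y := by
    intro x y
    rw [pdx_log hγ hγpos x y, mul_div_cancel₀ _ (hγpos x y).ne']
  have q2 : ∀ x y, pdx (pdx γ) x y
      = pdx γ x y * pdx G x y + γ x y * pdx (pdx G) x y := by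
    intro x y
    have hfe : (fun t => pdx γ t y) = (fun t => γ t y * pdx G t y) :=
      funext fun t => q1 t y
    have : pdx (pdx γ) x y = deriv (fun t => γ t y * pdx G t y) x := by
      show deriv (fun t => pdx γ t y) x = _
      rw [hfe]
    rw [this]
    exact ((hasDerivX hγ x y).mul (hasDerivX (pdx_smooth hG) x y)).deriv
  have q3 : pdx (pdx (pdx γ)) x y
      = (pdx (pdx γ) x y * pdx G x y + pdx γ x y * pdx (pdx G) x y)
        + (pdx γ x y * pdx (pdx G) x y + γ x y * pdx (pdx (pdx G)) x y) := by
    have hfe : (fun t => pdx (pdx γ) t y)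
        = (fun t => pdx γ t y * pdx G t y + γ t y * pdx (pdx G) t y) :=
      funext fun t => q2 t y
    have : pdx (pdx (pdx γ)) x y
        = deriv (fun t => pdx γ t y * pdx G t y + γ t y * pdx (pdx G) t y) x := by
      show deriv (fun t => pdx (pdx γ) t y) x = _
      rw [hfe]
    rw [this]
    exact (((hasDerivX (pdx_smooth hγ) x y).mul (hasDerivX (pdx_smooth hG) x y)).add
      ((hasDerivX hγ x y).mul (hasDerivX (pdx_smooth (pdx_smooth hG)) x y))).deriv
  rw [f1, q3, q2 x y, q1 x y]
  ring

end core

theorem gauss_codazzi_klab_form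
    (β γ V W k l a b : ℝ → ℝ → ℝ)
    (hβ : ContDiff ℝ (⊤ : ℕ∞) (Function.uncurry β)) (hγ : ContDiff ℝ (⊤ : ℕ∞) (Function.uncurry γ))
    (hV : ContDiff ℝ (⊤ : ℕ∞) (Function.uncurry V)) (hW : ContDiff ℝ (⊤ : ℕ∞) (Function.uncurry W))
    (hβpos : ∀ x y, β x y > 0) (hγpos : ∀ x y, γ x y > 0)
    (h1 : ∀ x y, pdy (pdy (pdy β)) x y - 2 * pdy β x y * W x y - β x y * pdy W x y
        = pdx (pdx (pdx γ)) x y - 2 * pdx γ x y * V x y - γ x y * pdx V x y)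
    (h2 : ∀ x y, pdx W x y = 2 * γ x y * pdy β x y + β x y * pdy γ x y)
    (h3 : ∀ x y, pdy V x y = 2 * β x y * pdx γ x y + γ x y * pdx β x y)
    (hk : ∀ x y, k x y = β x y * γ x y - pdy (pdx (fun x y => Real.log (β x y))) x y)
    (hl : ∀ x y, l x y = β x y * γ x y - pdy (pdx (fun x y => Real.log (γ x y))) x y)
    (ha : ∀ x y, a x y = W x y - pdy (pdy (fun x y => Real.log (β x y))) x y
        - (1/2) * (pdy (fun x y => Real.log (β x y)) x y)^2)
    (hb : ∀ x y, b x y = V x y - pdx (pdx (fun x y => Real.log (γ x y))) x y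
        - (1/2) * (pdx (fun x y => Real.log (γ x y)) x y)^2) :
    (∀ x y, pdx a x y = pdy k x y + (pdy β x y / β x y) * k x y) ∧
    (∀ x y, pdy b x y = pdx l x y + (pdx γ x y / γ x y) * l x y) ∧
    (∀ x y, β x y * pdy a x y + 2 * a x y * pdy β x y
        = γ x y * pdx b x y + 2 * b x y * pdx γ x y) := by
  have haf : a = fun x y => W x y - pdy (pdy (fun x y => Real.log (β x y))) x y
      - (1/2) * (pdy (fun x y => Real.log (β x y)) x y)^2 :=
    funext fun x => funext fun y => ha x y
  have hbf : b = fun x y => V x y - pdx (pdx (fun x y => Real.log (γ x y))) x y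
      - (1/2) * (pdx (fun x y => Real.log (γ x y)) x y)^2 :=
    funext fun x => funext fun y => hb x y
  have hkf : k = fun x y => β x y * γ x y
      - pdy (pdx (fun x y => Real.log (β x y))) x y :=
    funext fun x => funext fun y => hk x y
  have hlf : l = fun x y => β x y * γ x y
      - pdy (pdx (fun x y => Real.log (γ x y))) x y :=
    funext fun x => funext fun y => hl x y
  refine ⟨fun x y => ?_, fun x y => ?_, fun x y => ?_⟩
  · rw [haf, hkf]
    exact claim1 hβ hγ hW hβpos h2 x y
  · rw [hbf, hlf]
    exact claim2 hβ hγ hV hγpos h3 x y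
  · rw [haf, hbf]
    rw [claim3y hβ hW hβpos x y, h1 x y, ← claim3x hγ hV hγpos x y]
end
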